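/- Let M be a compact metric space, h : M × M → ℝ continuous, and define (T u)(q) = min_{q'∈M}(u(q') + h(q',q)). Suppose (u_k)_{k∈ℕ} is a sequence of fixed points of T (i.e. T u_k = u_k for all k) that is uniformly bounded and equicontinuous, and suppose u* := liminf_{k→∞} u_k exists pointwise and is continuous. Then u* is also a fixed point of T: T u* = u*. -/

import Mathlib

/-!
Every `u_k` is continuous on the compact space `M`, so being a fixed point means that for each
`q` the infimum defining `(T u_k)(q)` is attained at some `x_k`:
`u_k q = u_k x_k + h (x_k, q)`, and `u_k q ≤ u_k q' + h (q', q)` for all `q'`.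
The inequality passes to the liminf, giving `u* q ≤ (T u*) q`. For the converse, take an
ultrafilter `𝒰` along which `u_k q → u* q` and let `q̄` be the limit of `x_k` along `𝒰`.
Equicontinuity at `q̄` lets us replace `u_k x_k` by `u_k q̄`, so `u* q - h (q̄, q)` is a cluster
point of `k ↦ u_k q̄`, hence bounds its liminf `u* q̄` from above.
-/

open Filter Function Set Topology Uniformity

noncomputable def laxOleinik {M : Type*} (h : M × M → ℝ) (u : M → ℝ) (q : M) : ℝ :=
  ⨅ q' : M, (u q' + h (q', q))

section LaxOleinik

variable {M : Type*} {h : M × M → ℝ} {u : M → ℝ}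

theorem laxOleinik_eq_of_isLeast {q : M} (hq : IsLeast (range fun q' => u q' + h (q', q)) (u q)) :
    laxOleinik h u q = u q :=
  hq.csInf_eq

theorem isLeast_of_isFixedPt_laxOleinik [TopologicalSpace M] [CompactSpace M]
    (hh : Continuous h) (hu : Continuous u) (hfix : IsFixedPt (laxOleinik h) u) (q : M) :
    IsLeast (range fun q' => u q' + h (q', q)) (u q) := by
  have : Nonempty M := ⟨q⟩
  have hcont : Continuous fun q' => u q' + h (q', q) := by fun_prop
  obtain ⟨a, ha⟩ := (isCompact_range hcont).exists_isLeast (range_nonempty _)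
  have ha' : laxOleinik h u q = a := ha.csInf_eq
  rwa [← congrFun hfix q, ha']

end LaxOleinik

section UniformlyBounded

variable {ι M : Type*} {l : Filter ι} {u : ι → M → ℝ} {C : ℝ}

theorem isBoundedUnder_apply_of_abs_le (hC : ∀ k q, |u k q| ≤ C) (q : M) :
    IsBoundedUnder (· ≤ ·) l (u · q) ∧ IsBoundedUnder (· ≥ ·) l (u · q) :=
  isBoundedUnder_le_abs.1 (isBoundedUnder_of ⟨C, fun k => hC k q⟩)

variable [NeBot l]

theorem liminf_apply_le_liminf_apply_add (hC : ∀ k q, |u k q| ≤ C) {q q' : M} {c : ℝ}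
    (hle : ∀ k, u k q ≤ u k q' + c) :
    liminf (u · q) l ≤ liminf (u · q') l + c := by
  obtain ⟨hq'_le, hq'_ge⟩ := isBoundedUnder_apply_of_abs_le (l := l) hC q'
  have hshift_le : IsBoundedUnder (· ≤ ·) l fun k => u k q' + c :=
    isBoundedUnder_of ⟨C + c, fun k => by gcongr; exact le_of_abs_le (hC k q')⟩
  calc liminf (u · q) l ≤ liminf (fun k => u k q' + c) l :=
        liminf_le_liminf (Eventually.of_forall hle) (isBoundedUnder_apply_of_abs_le hC q).2
          hshift_le.isCoboundedUnder_ge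
    _ = liminf (u · q') l + c := liminf_add_const l _ c hq'_le.isCoboundedUnder_ge hq'_ge

theorem exists_liminf_apply_add_le [TopologicalSpace M] [CompactSpace M]
    (hequi : Equicontinuous u) (hC : ∀ k q, |u k q| ≤ C) {g : M → ℝ} (hg : Continuous g)
    {q : M} (hmin : ∀ k, ∃ q', u k q' + g q' = u k q) :
    ∃ q', liminf (u · q') l + g q' ≤ liminf (u · q) l := by
  choose x hx using hmin
  have hbdd := isBoundedUnder_apply_of_abs_le (l := l) hC
  set L := liminf (u · q) l
  obtain ⟨𝒰, h𝒰l, hL⟩ := mapClusterPt_iff_ultrafilter.1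
    (MapClusterPt.liminf (hbdd q).1.isCoboundedUnder_ge (hbdd q).2)
  set q₀ := (𝒰.map x).lim
  have hx₀ : Tendsto x 𝒰 (𝓝 q₀) := (𝒰.map x).le_nhds_lim
  have hux : Tendsto (fun k => u k (x k)) 𝒰 (𝓝 (L - g q₀)) :=
    (hL.sub ((hg.tendsto q₀).comp hx₀)).congr fun k => by simp [← hx k]
  have hclose : Tendsto (fun k => (u k q₀, u k (x k))) 𝒰 (𝓤 ℝ) := fun U hU =>
    (hx₀.eventually (hequi q₀ U hU)).mono fun k hk => hk k
  have hcluster : MapClusterPt (L - g q₀) l (u · q₀) :=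
    mapClusterPt_iff_ultrafilter.2 ⟨𝒰, h𝒰l, (Uniform.tendsto_congr hclose).2 hux⟩
  exact ⟨q₀, by linarith [hcluster.liminf_le (hbdd q₀).2]⟩

end UniformlyBounded

theorem liminf_of_fixed_points_is_fixed_general {M : Type*} [MetricSpace M] [CompactSpace M]
    (h : M × M → ℝ) (hh : Continuous h)
    (T : (M → ℝ) → (M → ℝ))
    (hT : ∀ u q, T u q = ⨅ q' : M, (u q' + h (q', q)))
    (u : ℕ → M → ℝ)
    (hfix : ∀ k, T (u k) = u k)
    (hbdd : ∃ C : ℝ, ∀ k q, |u k q| ≤ C)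
    (hequi : Equicontinuous u)
    (ustar : M → ℝ)
    (hstar : ∀ q, ustar q = liminf (fun k => u k q) atTop) :
    T ustar = ustar := by
  obtain rfl : T = laxOleinik h := funext fun v => funext (hT v)
  obtain rfl : ustar = fun q => liminf (u · q) atTop := funext hstar
  obtain ⟨C, hC⟩ := hbdd
  have hleast k q := isLeast_of_isFixedPt_laxOleinik hh (hequi.continuous k) (hfix k) q
  funext q
  have hlower (q' : M) : liminf (u · q) atTop ≤ liminf (u · q') atTop + h (q', q) :=
    liminf_apply_le_liminf_apply_add (l := atTop) hC fun k => (hleast k q).2 ⟨q', rfl⟩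
  obtain ⟨q₀, hq₀⟩ := exists_liminf_apply_add_le (l := atTop) hequi hC
    (g := fun q' => h (q', q)) (by fun_prop) fun k => (hleast k q).1
  exact laxOleinik_eq_of_isLeast
    ⟨⟨q₀, le_antisymm hq₀ (hlower q₀)⟩, forall_mem_range.2 hlower⟩

/-- If `(u_k)` is a uniformly bounded, equicontinuous sequence of fixed points of the
  abstract Lax-Oleinik operator `T` and `u* = liminf u_k` is continuous, then `u*`
  is also a fixed point of `T`. -/
theorem liminf_of_fixed_points_is_fixed {M : Type*} [MetricSpace M] [CompactSpace M]
    [Nonempty M]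
    (h : M × M → ℝ) (hh : Continuous h)
    (T : (M → ℝ) → (M → ℝ))
    (hT : ∀ u q, T u q = ⨅ q' : M, (u q' + h (q', q)))
    (u : ℕ → M → ℝ)
    (hucont : ∀ k, Continuous (u k))
    (hfix : ∀ k, T (u k) = u k)
    (hbdd : ∃ C : ℝ, ∀ k q, |u k q| ≤ C)
    (hequi : Equicontinuous u)
    (ustar : M → ℝ)
    (hstar : ∀ q, ustar q = liminf (fun k => u k q) atTop)
    (hstarcont : Continuous ustar) :
    T ustar = ustar :=
  liminf_of_fixed_points_is_fixed_general h hh T hT u hfix hbdd hequi ustar hstar
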